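/- The connective constant of the bridge graph $\mathbb{B}_\Delta$ equals $\sqrt{\Delta - 1}$, for every integer $\Delta \ge 2$. -/

import Mathlib

/-!
A self-avoiding walk on `ℤ` can never turn back, so an `n`-step walk from `v` runs along one of
the two rays from `v`. Along a ray the edge multiplicities alternate between `Δ - 1` and `1`, so
each ray carries between `(Δ - 1) ^ ⌊n/2⌋` and `(Δ - 1) ^ ⌈n/2⌉` walks. Hence `σₙ` is squeezed
between `√(Δ - 1) ^ n / √(Δ - 1)` and `2 √(Δ - 1) · √(Δ - 1) ^ n`, and its `n`-th root tends to
`√(Δ - 1)`.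
-/

open Filter Function Finset Topology

/-- Edge multiplicities of the bridge multigraph `𝔹_Δ` on `ℤ`: each edge
`{2k, 2k+1}` of `ℤ` is replaced by `Δ - 1` parallel edges, while each edge
`{2k+1, 2k+2}` remains a single edge; non-neighbouring pairs get no edge. -/
def bridgeMult (Δ : ℕ) (u v : ℤ) : ℕ :=
  if v = u + 1 ∨ u = v + 1 then (if Even (min u v) then Δ - 1 else 1) else 0

/-- The number of `n`-step self-avoiding walks on the multigraph `𝔹_Δ` starting at `v`:
a walk consists of a self-avoiding vertex sequence together with a choice of one of the
parallel edges for each step. -/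
noncomputable def bridgeSawCount (Δ : ℕ) (v : ℤ) (n : ℕ) : ℕ :=
  Nat.card {pe : (Fin (n + 1) → ℤ) × (Fin n → ℕ) //
    pe.1 0 = v ∧ Function.Injective pe.1 ∧
    ∀ i : Fin n, pe.2 i < bridgeMult Δ (pe.1 i.castSucc) (pe.1 i.succ)}

theorem Int.exists_unit_eq_add_mul_of_injective {n : ℕ} {p : Fin (n + 1) → ℤ} (hp : Injective p)
    (hadj : ∀ i : Fin n, p i.succ = p i.castSucc + 1 ∨ p i.castSucc = p i.succ + 1) :
    ∃ d : ℤˣ, ∀ i : Fin (n + 1), p i = p 0 + d * (i : ℕ) := by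
  rcases n with _ | m
  · exact ⟨1, fun i => by simp [Fin.fin_one_eq_zero i]⟩
  obtain ⟨d, hd⟩ : ∃ d : ℤˣ, p 1 = p 0 + d := by
    rcases hadj 0 with h | h
    · exact ⟨1, by simpa using h⟩
    · refine ⟨-1, ?_⟩
      simp only [Fin.castSucc_zero, Fin.succ_zero_eq_one, Units.val_neg, Units.val_one] at h ⊢
      omega
  have hd_cases : (d : ℤ) = 1 ∨ (d : ℤ) = -1 := by
    rcases Int.units_eq_one_or d with rfl | rfl <;> simp
  refine ⟨d, ?_⟩
  -- injectivity forbids `p (k + 2) = p k`, so every step repeats the first one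
  have step : ∀ k (hk : k < m + 1), p ⟨k + 1, by omega⟩ = p ⟨k, by omega⟩ + d ∧
      p ⟨k, by omega⟩ = p 0 + d * k := by
    intro k
    induction k with
    | zero => exact fun _ => ⟨hd, by simp⟩
    | succ k ih =>
      intro hk
      obtain ⟨h1, h2⟩ := ih (by omega)
      have hne : p ⟨k + 1 + 1, by omega⟩ ≠ p ⟨k, by omega⟩ := fun h =>
        absurd (Fin.mk.inj_iff.mp (hp h)) (by omega)
      have hadj_k := hadj ⟨k + 1, hk⟩
      simp only [Fin.succ_mk, Fin.castSucc_mk] at hadj_k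
      refine ⟨by omega, ?_⟩
      push_cast
      rw [h1, h2]
      ring
  rintro ⟨i, hi⟩
  rcases Nat.lt_succ_iff_lt_or_eq.mp hi with hi | rfl
  · exact (step i hi).2
  · obtain ⟨h1, h2⟩ := step m (by omega)
    rw [h1, h2]
    push_cast
    ring

section
variable {ι : Type*} (m : ι → ℕ)

def Equiv.subtypeForallLtEquivPiFin : {e : ι → ℕ // ∀ i, e i < m i} ≃ ∀ i, Fin (m i) :=
  (Equiv.subtypePiEquivPi (p := fun i b => b < m i)).trans
    (Equiv.piCongrRight fun _ => Fin.equivSubtype.symm)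

instance [Finite ι] : Finite {e : ι → ℕ // ∀ i, e i < m i} :=
  Finite.of_equiv _ (Equiv.subtypeForallLtEquivPiFin m).symm

lemma Nat.card_subtype_forall_lt [Fintype ι] :
    Nat.card {e : ι → ℕ // ∀ i, e i < m i} = ∏ i, m i := by
  rw [Nat.card_congr (Equiv.subtypeForallLtEquivPiFin m), Nat.card_pi]
  simp

end

section
variable {f : ℕ → ℕ} {t : ℕ} (hf : ∀ i, f i * f (i + 1) = t)
include hf

lemma prod_range_add_two_of_mul_succ_eq (n : ℕ) :
    ∏ i ∈ range (n + 2), f i = (∏ i ∈ range n, f i) * t := by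
  rw [prod_range_succ, prod_range_succ, mul_assoc, hf]

lemma pow_div_two_le_prod_range_of_mul_succ_eq (hpos : ∀ i, 0 < f i) (n : ℕ) :
    t ^ (n / 2) ≤ ∏ i ∈ range n, f i := by
  induction n using Nat.twoStepInduction with
  | zero => simp
  | one => simpa [Nat.one_le_iff_ne_zero, Nat.pos_iff_ne_zero] using hpos 0
  | more n ih _ =>
    rw [prod_range_add_two_of_mul_succ_eq hf, Nat.add_div_right n two_pos, pow_succ]
    exact Nat.mul_le_mul_right t ih

lemma prod_range_le_pow_succ_div_two_of_mul_succ_eq (hpos : ∀ i, 0 < f i) (n : ℕ) :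
    ∏ i ∈ range n, f i ≤ t ^ ((n + 1) / 2) := by
  induction n using Nat.twoStepInduction with
  | zero => simp
  | one => simpa [← hf 0] using Nat.le_mul_of_pos_right _ (hpos 1)
  | more n ih _ =>
    rw [prod_range_add_two_of_mul_succ_eq hf, show n + 2 + 1 = n + 1 + 2 by ring,
      Nat.add_div_right _ two_pos, pow_succ]
    exact Nat.mul_le_mul_right t ih

end

lemma tendsto_const_mul_pow_rpow_one_div {c C : ℝ} (hc : 0 ≤ c) (hC : 0 < C) :
    Tendsto (fun n : ℕ => (C * c ^ n) ^ ((1 : ℝ) / n)) atTop (𝓝 c) := by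
  have hroot : Tendsto (fun n : ℕ => C ^ ((1 : ℝ) / n)) atTop (𝓝 1) := by
    simpa using tendsto_const_nhds.rpow tendsto_one_div_atTop_nhds_zero_nat (Or.inl hC.ne')
  refine (by simpa using hroot.mul_const c : Tendsto _ _ (𝓝 c)).congr' ?_
  filter_upwards [eventually_ne_atTop 0] with n hn
  rw [Real.mul_rpow hC.le (pow_nonneg hc n), one_div, Real.pow_rpow_inv_natCast hc hn]

lemma tendsto_rpow_one_div_of_le_of_le {a : ℕ → ℝ} {c C₁ C₂ : ℝ} (hc : 0 ≤ c) (hC₁ : 0 < C₁)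
    (hC₂ : 0 < C₂) (hlow : ∀ᶠ n in atTop, C₁ * c ^ n ≤ a n)
    (hup : ∀ᶠ n in atTop, a n ≤ C₂ * c ^ n) :
    Tendsto (fun n : ℕ => a n ^ ((1 : ℝ) / n)) atTop (𝓝 c) := by
  refine tendsto_of_tendsto_of_tendsto_of_le_of_le'
    (tendsto_const_mul_pow_rpow_one_div hc hC₁) (tendsto_const_mul_pow_rpow_one_div hc hC₂) ?_ ?_
  · exact hlow.mono fun n h => Real.rpow_le_rpow (by positivity) h (by positivity)
  · exact (hlow.and hup).mono fun n h =>
      Real.rpow_le_rpow ((by positivity : 0 ≤ C₁ * c ^ n).trans h.1) h.2 (by positivity)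

section
variable {s : ℝ} (hs : 1 ≤ s) (n : ℕ)
include hs

lemma inv_mul_pow_le_sq_pow_div_two : s⁻¹ * s ^ n ≤ (s ^ 2) ^ (n / 2) := by
  rw [inv_mul_le_iff₀ (by positivity), ← pow_mul, ← pow_succ']
  exact pow_le_pow_right₀ hs (by omega)

lemma sq_pow_succ_div_two_le : (s ^ 2) ^ ((n + 1) / 2) ≤ s * s ^ n := by
  rw [← pow_mul, ← pow_succ']
  exact pow_le_pow_right₀ hs (by omega)

end

lemma adj_of_bridgeMult_ne_zero {Δ : ℕ} {u w : ℤ} (h : bridgeMult Δ u w ≠ 0) :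
    w = u + 1 ∨ u = w + 1 := by
  by_contra hadj
  exact h (if_neg hadj)

lemma bridgeMult_pos {Δ : ℕ} (hΔ : 2 ≤ Δ) (u : ℤ) (d : ℤˣ) : 0 < bridgeMult Δ u (u + d) := by
  have hadj : u + d = u + 1 ∨ u = u + d + 1 := by
    rcases Int.units_eq_one_or d with rfl | rfl <;> simp
  rw [bridgeMult, if_pos hadj]
  split_ifs <;> omega

lemma bridgeMult_mul_bridgeMult (Δ : ℕ) (u : ℤ) (d : ℤˣ) :
    bridgeMult Δ u (u + d) * bridgeMult Δ (u + d) (u + d + d) = Δ - 1 := by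
  rcases Int.units_eq_one_or d with rfl | rfl <;> by_cases hu : Even u <;>
    simp [bridgeMult, hu, ← sub_eq_add_neg, parity_simps]

/-- The number of `n`-step walks from `v` along the ray in direction `d`. -/
def bridgeRayCount (Δ : ℕ) (v : ℤ) (d : ℤˣ) (n : ℕ) : ℕ :=
  ∏ i : Fin n, bridgeMult Δ (v + d * (i : ℕ)) (v + d * (i : ℕ) + d)

lemma bridgeSawCount_eq_sum_bridgeRayCount (Δ : ℕ) (v : ℤ) {n : ℕ} (hn : n ≠ 0) :
    bridgeSawCount Δ v n = ∑ d : ℤˣ, bridgeRayCount Δ v d n := by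
  let ray (d : ℤˣ) (i : Fin (n + 1)) : ℤ := v + d * (i : ℕ)
  have ray_castSucc (d : ℤˣ) (i : Fin n) : ray d i.castSucc = v + d * (i : ℕ) := rfl
  have ray_succ (d : ℤˣ) (i : Fin n) : ray d i.succ = v + d * (i : ℕ) + d := by
    simp only [ray, Fin.val_succ]
    push_cast
    ring
  let g : (Σ d : ℤˣ, {e : Fin n → ℕ //
        ∀ i, e i < bridgeMult Δ (v + d * (i : ℕ)) (v + d * (i : ℕ) + d)}) →
      {pe : (Fin (n + 1) → ℤ) × (Fin n → ℕ) // pe.1 0 = v ∧ Injective pe.1 ∧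
        ∀ i : Fin n, pe.2 i < bridgeMult Δ (pe.1 i.castSucc) (pe.1 i.succ)} :=
    fun ⟨d, e, he⟩ => ⟨(ray d, e), by simp [ray],
      fun i j hij => by simpa [ray, Fin.ext_iff] using hij,
      fun i => by simpa only [ray_castSucc, ray_succ] using he i⟩
  have hg : Bijective g := by
    constructor
    · rintro ⟨d, e, he⟩ ⟨d', e', he'⟩ h
      simp only [g, Subtype.mk.injEq, Prod.mk.injEq] at h
      refine Sigma.subtype_ext (Units.ext ?_) h.2
      simpa [ray] using congrFun h.1 ⟨1, by omega⟩
    · rintro ⟨⟨p, e⟩, hp0, hinj, he⟩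
      dsimp only at hp0 hinj he
      obtain ⟨d, hd⟩ := Int.exists_unit_eq_add_mul_of_injective hinj
        fun i => adj_of_bridgeMult_ne_zero (Nat.ne_zero_of_lt (he i))
      obtain rfl : p = ray d := funext fun i => by rw [hd, hp0]
      exact ⟨⟨d, e, fun i => by simpa only [ray_castSucc, ray_succ] using he i⟩, rfl⟩
  rw [bridgeSawCount, ← Nat.card_congr (Equiv.ofBijective g hg), Nat.card_sigma]
  simp only [Nat.card_subtype_forall_lt, bridgeRayCount]

section
variable {Δ : ℕ} (hΔ : 2 ≤ Δ) (v : ℤ) (d : ℤˣ) (n : ℕ)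

lemma bridgeRayCount_eq_prod_range :
    bridgeRayCount Δ v d n = ∏ i ∈ range n, bridgeMult Δ (v + d * i) (v + d * i + d) :=
  Fin.prod_univ_eq_prod_range (fun i => bridgeMult Δ (v + d * i) (v + d * i + d)) n

lemma bridgeMult_mul_bridgeMult_succ (i : ℕ) :
    bridgeMult Δ (v + d * i) (v + d * i + d) *
      bridgeMult Δ (v + d * (i + 1 : ℕ)) (v + d * (i + 1 : ℕ) + d) = Δ - 1 := by
  rw [show v + d * ((i + 1 : ℕ) : ℤ) = v + d * i + d by push_cast; ring]
  exact bridgeMult_mul_bridgeMult Δ _ d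

include hΔ

lemma pow_div_two_le_bridgeRayCount : (Δ - 1) ^ (n / 2) ≤ bridgeRayCount Δ v d n := by
  rw [bridgeRayCount_eq_prod_range]
  exact pow_div_two_le_prod_range_of_mul_succ_eq (bridgeMult_mul_bridgeMult_succ v d)
    (fun i => bridgeMult_pos hΔ _ _) n

lemma bridgeRayCount_le_pow_succ_div_two :
    bridgeRayCount Δ v d n ≤ (Δ - 1) ^ ((n + 1) / 2) := by
  rw [bridgeRayCount_eq_prod_range]
  exact prod_range_le_pow_succ_div_two_of_mul_succ_eq (bridgeMult_mul_bridgeMult_succ v d)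
    (fun i => bridgeMult_pos hΔ _ _) n

variable {n}

lemma pow_div_two_le_bridgeSawCount (hn : n ≠ 0) : (Δ - 1) ^ (n / 2) ≤ bridgeSawCount Δ v n := by
  rw [bridgeSawCount_eq_sum_bridgeRayCount Δ v hn]
  exact (pow_div_two_le_bridgeRayCount hΔ v 1 n).trans
    (single_le_sum_of_canonicallyOrdered (f := (bridgeRayCount Δ v · n)) (mem_univ 1))

lemma bridgeSawCount_le (hn : n ≠ 0) : bridgeSawCount Δ v n ≤ 2 * (Δ - 1) ^ ((n + 1) / 2) := by
  rw [bridgeSawCount_eq_sum_bridgeRayCount Δ v hn, ← Fintype.card_units_int, ← smul_eq_mul]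
  exact sum_le_card_nsmul _ _ _ fun d _ => bridgeRayCount_le_pow_succ_div_two hΔ v d n

end

/-- The connective constant of the bridge graph `𝔹_Δ` equals `√(Δ-1)`. -/
theorem bridge_graph_connective_constant (Δ : ℕ) (hΔ : 2 ≤ Δ) (v : ℤ) :
    Tendsto (fun n : ℕ => (bridgeSawCount Δ v n : ℝ) ^ ((1 : ℝ) / n)) atTop
      (nhds (Real.sqrt ((Δ : ℝ) - 1))) := by
  set s := Real.sqrt ((Δ : ℝ) - 1)
  have hΔ' : (1 : ℝ) ≤ (Δ : ℝ) - 1 := by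
    have : (2 : ℝ) ≤ Δ := by exact_mod_cast hΔ
    linarith
  have hs : 1 ≤ s := Real.one_le_sqrt.mpr hΔ'
  have hsq : ((Δ - 1 : ℕ) : ℝ) = s ^ 2 := by
    rw [Real.sq_sqrt (by linarith), Nat.cast_sub (by omega), Nat.cast_one]
  refine tendsto_rpow_one_div_of_le_of_le (C₁ := s⁻¹) (C₂ := 2 * s) (by positivity)
    (by positivity) (by positivity) ?_ ?_ <;> filter_upwards [eventually_ne_atTop 0] with n hn
  · calc s⁻¹ * s ^ n ≤ (s ^ 2) ^ (n / 2) := inv_mul_pow_le_sq_pow_div_two hs n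
      _ = ((Δ - 1) ^ (n / 2) : ℕ) := by rw [Nat.cast_pow, hsq]
      _ ≤ bridgeSawCount Δ v n := by exact_mod_cast pow_div_two_le_bridgeSawCount hΔ v hn
  · calc (bridgeSawCount Δ v n : ℝ) ≤ (2 * (Δ - 1) ^ ((n + 1) / 2) : ℕ) := by
          exact_mod_cast bridgeSawCount_le hΔ v hn
      _ = 2 * (s ^ 2) ^ ((n + 1) / 2) := by rw [Nat.cast_mul, Nat.cast_pow, hsq, Nat.cast_two]
      _ ≤ 2 * s * s ^ n := by
          rw [mul_assoc]
          exact mul_le_mul_of_nonneg_left (sq_pow_succ_div_two_le hs n) zero_le_two
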